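/- arXiv:2306.16876 — 3 statements merged into one kernel-verified Lean document; each statement's English description precedes it below -/
import Mathlib

section
/- For every natural number m ≥ 1 and every real ζ, the Vieta–Lucas polynomial has the explicit power-series representation VL_m(ζ) = Σ_{i=0}^{⌊m/2⌋} (−1)^i · (m · (m−i−1)!) / (i! · (m−2i)!) · ζ^{m−2i}. -/
open Real Finset

/-- The Vieta–Lucas polynomials, defined recursively. -/
noncomputable def VL : ℕ → ℝ → ℝ
  | 0, _ => 2
  | 1, ζ => ζ
  | (m + 2), ζ => ζ * VL (m + 1) ζ - VL m ζ

noncomputable def S (n : ℕ) (ζ : ℝ) : ℝ :=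
  ∑ i ∈ Finset.range (n / 2 + 1),
      (-1 : ℝ) ^ i * ((n : ℝ) * (Nat.factorial (n - i - 1) : ℝ)) /
        ((Nat.factorial i : ℝ) * (Nat.factorial (n - 2 * i) : ℝ)) * ζ ^ (n - 2 * i)

lemma coeff0 (m : ℕ) (ζ : ℝ) (h : 1 ≤ m) :
    (-1:ℝ)^(0:ℕ) * ((m:ℝ) * (Nat.factorial (m-0-1) : ℝ)) /
      ((Nat.factorial 0 : ℝ) * (Nat.factorial (m-2*0) : ℝ)) * ζ^(m-2*0) = ζ^m := by
  obtain ⟨j, rfl⟩ : ∃ j, m = j+1 := ⟨m-1, by omega⟩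
  simp only [pow_zero, Nat.sub_zero, Nat.mul_zero, Nat.add_sub_cancel, Nat.factorial_zero,
    Nat.cast_one, one_mul, Nat.factorial_succ]
  have h1 : (j:ℝ)+1 ≠ 0 := by positivity
  have h2 : (Nat.factorial j : ℝ) ≠ 0 := by exact_mod_cast (Nat.factorial_pos j).ne'
  push_cast
  field_simp

lemma Srec (n : ℕ) (hn : 1 ≤ n) (ζ : ℝ) : S (n + 2) ζ = ζ * S (n + 1) ζ - S n ζ := by
  have helper : ∀ a b c d e f g : ℝ, a = d - f → b = -g → c = e → (a + b) + c = (d + e) - (f + g) := by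
    intros a b c d e f g h1 h2 h3; rw [h1, h2, h3]; ring
  have helper2 : ∀ a b d e f : ℝ, a = d - f → b = e → a + b = (d + e) - f := by
    intros a b d e f h1 h2; rw [h1, h2]; ring
  obtain ⟨k, rfl | rfl⟩ : ∃ k, n = 2*k+1 ∨ n = 2*k+2 := ⟨(n-1)/2, by omega⟩
  · simp only [S]
    rw [show (2*k+1+2)/2+1 = k+2 from by omega, show (2*k+1+1)/2+1 = k+2 from by omega,
        show (2*k+1)/2+1 = k+1 from by omega]
    rw [Finset.mul_sum, Finset.sum_range_succ' _ (k+1), Finset.sum_range_succ' _ (k+1)]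
    apply helper2
    · rw [← Finset.sum_sub_distrib]
      refine Finset.sum_congr rfl ?_
      intro i hi
      simp only [Finset.mem_range] at hi
      obtain ⟨d, rfl⟩ := Nat.exists_eq_add_of_le (Nat.lt_succ_iff.mp hi)
      simp only [show 2*(i+d)+1+2-(i+1)-1 = (i+2*d)+1 from by omega,
        show 2*(i+d)+1+2-2*(i+1) = 2*d+1 from by omega,
        show 2*(i+d)+1+1-(i+1)-1 = i+2*d from by omega,
        show 2*(i+d)+1+1-2*(i+1) = 2*d from by omega,
        show 2*(i+d)+1-i-1 = i+2*d from by omega,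
        show 2*(i+d)+1-2*i = 2*d+1 from by omega]
      rw [Nat.factorial_succ (i+2*d), Nat.factorial_succ i, Nat.factorial_succ (2*d),
        pow_succ ζ (2*d), pow_succ (-1:ℝ) i]
      have h1 : (Nat.factorial i : ℝ) ≠ 0 := by exact_mod_cast (Nat.factorial_pos i).ne'
      have h2 : (Nat.factorial (2*d) : ℝ) ≠ 0 := by exact_mod_cast (Nat.factorial_pos (2*d)).ne'
      have h3 : ((i:ℝ)+1) ≠ 0 := by positivity
      have h4 : (2*(d:ℝ)+1) ≠ 0 := by positivity
      push_cast
      field_simp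
      ring
    · rw [coeff0 (2*k+1+2) ζ (by omega), coeff0 (2*k+1+1) ζ (by omega),
        show 2*k+1+2 = (2*k+1+1)+1 from rfl, pow_succ]
      ring
  · simp only [S]
    rw [show (2*k+2+2)/2+1 = k+3 from by omega, show (2*k+2+1)/2+1 = k+2 from by omega,
        show (2*k+2)/2+1 = k+2 from by omega]
    rw [Finset.mul_sum, Finset.sum_range_succ' _ (k+2), Finset.sum_range_succ _ (k+1),
        Finset.sum_range_succ' _ (k+1), Finset.sum_range_succ _ (k+1)]
    apply helper
    · rw [← Finset.sum_sub_distrib]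
      refine Finset.sum_congr rfl ?_
      intro i hi
      simp only [Finset.mem_range] at hi
      obtain ⟨d, rfl⟩ := Nat.exists_eq_add_of_le (Nat.lt_succ_iff.mp hi)
      simp only [show 2*(i+d)+2+2-(i+1)-1 = (i+2*d+1)+1 from by omega,
        show 2*(i+d)+2+2-2*(i+1) = (2*d+1)+1 from by omega,
        show 2*(i+d)+2+1-(i+1)-1 = i+2*d+1 from by omega,
        show 2*(i+d)+2+1-2*(i+1) = 2*d+1 from by omega,
        show 2*(i+d)+2-i-1 = i+2*d+1 from by omega,
        show 2*(i+d)+2-2*i = (2*d+1)+1 from by omega]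
      rw [Nat.factorial_succ (i+2*d+1), Nat.factorial_succ (2*d+1), Nat.factorial_succ i,
        pow_succ ζ (2*d+1), pow_succ (-1:ℝ) i]
      have h1 : (Nat.factorial i : ℝ) ≠ 0 := by exact_mod_cast (Nat.factorial_pos i).ne'
      have h2 : (Nat.factorial (2*d+1) : ℝ) ≠ 0 := by exact_mod_cast (Nat.factorial_pos _).ne'
      have h3 : ((i:ℝ)+1) ≠ 0 := by positivity
      have h4 : (2*(d:ℝ)+2) ≠ 0 := by positivity
      push_cast
      field_simp
      ring
    · simp only [show 2*k+2+2-(k+1+1)-1 = k+1 from by omega,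
        show 2*k+2+2-2*(k+1+1) = 0 from by omega,
        show 2*k+2-(k+1)-1 = k from by omega,
        show 2*k+2-2*(k+1) = 0 from by omega,
        pow_zero, Nat.factorial_zero, Nat.cast_one]
      rw [Nat.factorial_succ (k+1), Nat.factorial_succ k,
        pow_succ (-1:ℝ) (k+1), pow_succ (-1:ℝ) k]
      have h1 : (Nat.factorial k : ℝ) ≠ 0 := by exact_mod_cast (Nat.factorial_pos k).ne'
      have h3 : ((k:ℝ)+1) ≠ 0 := by positivity
      have h4 : ((k:ℝ)+2) ≠ 0 := by positivity
      push_cast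
      field_simp
    · rw [coeff0 (2*k+2+2) ζ (by omega), coeff0 (2*k+2+1) ζ (by omega),
        show 2*k+2+2 = (2*k+2+1)+1 from rfl, pow_succ]
      ring

lemma S1 (ζ : ℝ) : S 1 ζ = ζ := by
  simp [S, Finset.sum_range_succ, Nat.factorial]

lemma S2 (ζ : ℝ) : S 2 ζ = ζ * ζ - 2 := by
  simp [S, Finset.sum_range_succ, Nat.factorial]
  ring

theorem vieta_lucas_power_series (m : ℕ) (hm : 1 ≤ m) (ζ : ℝ) :
    VL m ζ = ∑ i ∈ Finset.range (m / 2 + 1),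
      (-1 : ℝ) ^ i * ((m : ℝ) * (Nat.factorial (m - i - 1) : ℝ)) /
        ((Nat.factorial i : ℝ) * (Nat.factorial (m - 2 * i) : ℝ)) * ζ ^ (m - 2 * i) := by
  obtain ⟨k, rfl⟩ := Nat.exists_eq_add_of_le hm
  have main : ∀ k : ℕ, VL (1 + k) ζ = S (1 + k) ζ ∧ VL (1 + (k+1)) ζ = S (1 + (k+1)) ζ := by
    intro k
    induction k with
    | zero =>
      refine ⟨?_, ?_⟩
      · simp [VL, S1]
      · simpa [VL] using (S2 ζ).symm
    | succ k ih =>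
      refine ⟨ih.2, ?_⟩
      have h1 : 1 + (k + 1 + 1) = (1 + k) + 2 := by omega
      rw [h1, show VL ((1+k)+2) ζ = ζ * VL (1+k+1) ζ - VL (1+k) ζ from rfl,
        Srec (1+k) (by omega)]
      rw [show 1 + k + 1 = 1 + (k+1) by omega]
      rw [ih.1, ih.2]
  exact (main k).1
end

section
/- Rodrigues' formula for Vieta–Lucas polynomials: for every natural number m ≥ 1 and every ζ ∈ (−2, 2), VL_m(ζ) = (−1)^m · 2 · (m! / (2m)!) · √(4 − ζ²) · f^{(m)}(ζ), where f : (−2,2) → ℝ is the function f(ζ) = (4 − ζ²)^{m − 1/2} (real power) and f^{(m)} denotes its m-th derivative. -/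
/-!
On `(-2, 2)` the function `(4 - ζ²)^(m - 1/2)` is `(2 + ζ)^(m - 1/2) (2 - ζ)^(m - 1/2)`, so
Leibniz's rule writes its `m`-th derivative as a sum of products of descending Pochhammer
symbols at `m - 1/2`; multiplying by `√(4 - ζ²)` turns the `j`-th term into a multiple of
`(2 + ζ)^(m - j) (2 - ζ)^j`, and the Pochhammer symbols at half-integers collapse the coefficient
to `binom(2m, 2j) / 4^m`. With `ζ = 2 cos 2θ` the resulting sum is `4^m cos 2mθ`, the even part of
the binomial expansion of `(cos θ + i sin θ)^(2m)`, while `VL_m (2 cos φ) = 2 cos mφ`.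
-/

open Real

open Finset Polynomial

theorem Finset.sum_range_two_mul_add_one {M : Type*} [AddCommMonoid M] (g : ℕ → M) (n : ℕ) :
    ∑ k ∈ range (2 * n + 1), g k =
      ∑ j ∈ range (n + 1), g (2 * j) + ∑ j ∈ range n, g (2 * j + 1) := by
  induction n with
  | zero => simp
  | succ n ih =>
    rw [show 2 * (n + 1) + 1 = 2 * n + 1 + 1 + 1 by ring, sum_range_succ, sum_range_succ, ih,
      sum_range_succ (fun j => g (2 * j)) (n + 1), sum_range_succ (fun j => g (2 * j + 1)) n,
      show 2 * n + 1 + 1 = 2 * (n + 1) by ring]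
    abel

theorem add_pow_two_mul_add_neg_add_pow_two_mul {R : Type*} [CommRing R] (a b : R) (n : ℕ) :
    (a + b) ^ (2 * n) + (-a + b) ^ (2 * n) =
      2 * ∑ j ∈ range (n + 1), a ^ (2 * j) * b ^ (2 * (n - j)) * (2 * n).choose (2 * j) := by
  rw [add_pow, add_pow, ← sum_add_distrib, sum_range_two_mul_add_one, mul_sum]
  have hodd (k : ℕ) (hk : Odd k) :
      a ^ k * b ^ (2 * n - k) * (2 * n).choose k + (-a) ^ k * b ^ (2 * n - k) * (2 * n).choose k
        = 0 := by
    rw [hk.neg_pow]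
    ring
  rw [sum_eq_zero fun j _ => hodd _ (odd_two_mul_add_one j), add_zero]
  refine sum_congr rfl fun j _ => ?_
  rw [(even_two_mul j).neg_pow, Nat.mul_sub]
  ring

theorem cos_two_mul_nat_mul_eq_sum (n : ℕ) (θ : ℝ) :
    cos (2 * n * θ) =
      ∑ j ∈ range (n + 1), (-sin θ ^ 2) ^ j * (cos θ ^ 2) ^ (n - j) * (2 * n).choose (2 * j) := by
  have key := add_pow_two_mul_add_neg_add_pow_two_mul (Complex.sin θ * Complex.I) (Complex.cos θ) n
  have hpos := Complex.cos_add_sin_mul_I_pow (2 * n) θ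
  have hneg := Complex.cos_add_sin_mul_I_pow (2 * n) (-θ)
  simp only [Complex.cos_neg, Complex.sin_neg, mul_neg] at hneg
  have hterm (j : ℕ) : (Complex.sin θ * Complex.I) ^ (2 * j) * Complex.cos θ ^ (2 * (n - j)) =
      (-Complex.sin θ ^ 2) ^ j * (Complex.cos θ ^ 2) ^ (n - j) := by
    rw [pow_mul, pow_mul, mul_pow, Complex.I_sq]
    ring
  simp only [hterm] at key
  push_cast at hpos hneg
  apply Complex.ofReal_injective
  push_cast
  linear_combination (key - hpos - hneg) / 2

theorem VL_two_mul_cos : ∀ (n : ℕ) (θ : ℝ), VL n (2 * cos θ) = 2 * cos (n * θ)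
  | 0, θ => by simp [VL]
  | 1, θ => by simp [VL]
  | n + 2, θ => by
    rw [VL, VL_two_mul_cos (n + 1), VL_two_mul_cos n]
    push_cast
    rw [show ((n : ℝ) + 2) * θ = (n + 1) * θ + θ by ring,
      show (n : ℝ) * θ = (n + 1) * θ - θ by ring, cos_add, cos_sub]
    ring

theorem VL_eq_sum (n : ℕ) {x : ℝ} (hx : x ∈ Set.Icc (-2) 2) :
    VL n x = 2 / 4 ^ n *
      ∑ j ∈ range (n + 1), (x - 2) ^ j * (x + 2) ^ (n - j) * (2 * n).choose (2 * j) := by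
  obtain ⟨θ, rfl⟩ : ∃ θ, x = 2 * cos (2 * θ) :=
    ⟨arccos (x / 2) / 2, by
      rw [mul_div_cancel₀ _ two_ne_zero, cos_arccos] <;> linarith [hx.1, hx.2]⟩
  have hsub : 2 * cos (2 * θ) - 2 = 4 * (-sin θ ^ 2) := by rw [cos_two_mul, cos_sq']; ring
  have hadd : 2 * cos (2 * θ) + 2 = 4 * cos θ ^ 2 := by rw [cos_two_mul]; ring
  rw [VL_two_mul_cos, hsub, hadd, show (n : ℝ) * (2 * θ) = 2 * n * θ by ring,
    cos_two_mul_nat_mul_eq_sum, mul_sum, mul_sum]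
  refine sum_congr rfl fun j hj => ?_
  have h4 : (4 : ℝ) ^ j * 4 ^ (n - j) = 4 ^ n := by
    rw [← pow_add, Nat.add_sub_cancel' (Nat.lt_succ_iff.mp (mem_range.mp hj))]
  rw [mul_pow, mul_pow, ← h4]
  field_simp

theorem descPochhammer_eval_add_sub_half (k r : ℕ) :
    (descPochhammer ℝ k).eval ((k + r : ℕ) - 1 / 2 : ℝ) =
      (2 * (k + r)).factorial * r.factorial / (4 ^ k * (k + r).factorial * (2 * r).factorial) := by
  induction k generalizing r with
  | zero => simp [field]
  | succ k ih =>
    rw [descPochhammer_succ_eval, show k + 1 + r = k + (r + 1) by ring, ih,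
      show 2 * (r + 1) = 2 * r + 1 + 1 by ring, Nat.factorial_succ, Nat.factorial_succ,
      Nat.factorial_succ]
    push_cast
    field_simp
    ring

theorem choose_mul_descPochhammer_eval_sub_half (m j : ℕ) (hj : j ≤ m) :
    m.factorial / (2 * m).factorial * m.choose j * (descPochhammer ℝ j).eval ((m : ℝ) - 1 / 2) *
      (descPochhammer ℝ (m - j)).eval ((m : ℝ) - 1 / 2) = (2 * m).choose (2 * j) / 4 ^ m := by
  obtain ⟨r, rfl⟩ := Nat.exists_eq_add_of_le hj
  have h1 := descPochhammer_eval_add_sub_half j r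
  have h2 := descPochhammer_eval_add_sub_half r j
  rw [add_comm r j] at h2
  rw [Nat.add_sub_cancel_left, h1, h2, Nat.cast_choose ℝ (Nat.le_add_right j r),
    Nat.cast_choose ℝ (by omega : 2 * j ≤ 2 * (j + r)), Nat.add_sub_cancel_left,
    show 2 * (j + r) - 2 * j = 2 * r by omega, pow_add]
  field_simp

theorem iteratedDeriv_const_add_rpow (k : ℕ) (c a x : ℝ) :
    iteratedDeriv k (fun y => (c + y) ^ a) x = (descPochhammer ℝ k).eval a * (c + x) ^ (a - k) := by
  rw [iteratedDeriv_comp_const_add k (fun y => y ^ a) c, iteratedDeriv_eq_iterate]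
  exact iter_deriv_rpow_const a (c + x) k

theorem iteratedDeriv_const_sub_rpow (k : ℕ) (c a x : ℝ) :
    iteratedDeriv k (fun y => (c - y) ^ a) x =
      (-1) ^ k * (descPochhammer ℝ k).eval a * (c - x) ^ (a - k) := by
  rw [iteratedDeriv_comp_const_sub k (fun y => y ^ a) c, iteratedDeriv_eq_iterate, mul_assoc]
  exact congrArg _ (iter_deriv_rpow_const a (c - x) k)

theorem iteratedDeriv_four_sub_sq_rpow (n : ℕ) (a : ℝ) {x : ℝ} (hx : x ∈ Set.Ioo (-2) 2) :
    iteratedDeriv n (fun y => (4 - y ^ 2) ^ a) x = ∑ j ∈ range (n + 1), n.choose j *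
      ((descPochhammer ℝ j).eval a * (2 + x) ^ (a - j)) *
      ((-1) ^ (n - j) * (descPochhammer ℝ (n - j)).eval a * (2 - x) ^ (a - (n - j : ℕ))) := by
  have hfactor :
      (fun y => (4 - y ^ 2) ^ a) =ᶠ[nhds x] (fun y => (2 + y) ^ a) * (fun y => (2 - y) ^ a) := by
    filter_upwards [isOpen_Ioo.mem_nhds hx] with y hy
    rw [Pi.mul_apply, ← mul_rpow (by linarith [hy.1]) (by linarith [hy.2])]
    ring_nf
  have hadd : ContDiffAt ℝ n (fun y => (2 + y) ^ a) x :=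
    (contDiffAt_const.add contDiffAt_id).rpow_const_of_ne (by simp only [id]; linarith [hx.1])
  have hsub : ContDiffAt ℝ n (fun y => (2 - y) ^ a) x :=
    (contDiffAt_const.sub contDiffAt_id).rpow_const_of_ne (by simp only [id]; linarith [hx.2])
  simp only [hfactor.iteratedDeriv_eq, iteratedDeriv_mul hadd hsub, iteratedDeriv_const_add_rpow,
    iteratedDeriv_const_sub_rpow]

theorem sqrt_four_sub_sq_mul_rpow_mul_rpow (m : ℕ) {j : ℕ} (hj : j ≤ m) {x : ℝ}
    (hx : x ∈ Set.Ioo (-2) 2) :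
    √(4 - x ^ 2) * ((2 + x) ^ ((m : ℝ) - 1 / 2 - j) * (2 - x) ^ ((m : ℝ) - 1 / 2 - (m - j : ℕ))) =
      (2 + x) ^ (m - j) * (2 - x) ^ j := by
  have hadd : 0 < 2 + x := by linarith [hx.1]
  have hsub : 0 < 2 - x := by linarith [hx.2]
  rw [show 4 - x ^ 2 = (2 + x) * (2 - x) by ring, sqrt_mul hadd.le, sqrt_eq_rpow, sqrt_eq_rpow,
    mul_mul_mul_comm, ← rpow_add hadd, ← rpow_add hsub, ← rpow_natCast, ← rpow_natCast,
    Nat.cast_sub hj]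
  ring_nf

theorem vieta_lucas_rodrigues_general (m : ℕ)
    (f : ℝ → ℝ) (hf : ∀ ζ : ℝ, f ζ = (4 - ζ ^ 2) ^ ((m : ℝ) - 1 / 2)) :
    ∀ ζ ∈ Set.Ioo (-2 : ℝ) 2,
      VL m ζ = (-1 : ℝ) ^ m * 2 * ((Nat.factorial m : ℝ) / (Nat.factorial (2 * m) : ℝ)) *
        Real.sqrt (4 - ζ ^ 2) * iteratedDeriv m f ζ := by
  intro ζ hζ
  rw [show f = _ from funext hf, iteratedDeriv_four_sub_sq_rpow m _ hζ,
    VL_eq_sum m (Set.Ioo_subset_Icc_self hζ), mul_sum, mul_sum]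
  refine sum_congr rfl fun j hj => ?_
  have hj : j ≤ m := Nat.lt_succ_iff.mp (mem_range.mp hj)
  have hsign : (ζ - 2) ^ j = (-1) ^ m * (-1) ^ (m - j) * (2 - ζ) ^ j := by
    rw [← pow_add, show m + (m - j) = j + 2 * (m - j) by omega, pow_add, pow_mul, neg_one_sq,
      one_pow, mul_one, ← mul_pow, neg_one_mul, neg_sub]
  calc 2 / 4 ^ m * ((ζ - 2) ^ j * (ζ + 2) ^ (m - j) * (2 * m).choose (2 * j))
      = (-1) ^ m * 2 * (-1) ^ (m - j) * ((2 * m).choose (2 * j) / 4 ^ m) *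
          ((2 + ζ) ^ (m - j) * (2 - ζ) ^ j) := by
        rw [hsign, add_comm ζ 2]
        ring
    _ = _ := by
        rw [← choose_mul_descPochhammer_eval_sub_half m j hj,
          ← sqrt_four_sub_sq_mul_rpow_mul_rpow m hj hζ]
        ring

theorem vieta_lucas_rodrigues (m : ℕ) (hm : 1 ≤ m)
    (f : ℝ → ℝ) (hf : ∀ ζ : ℝ, f ζ = (4 - ζ ^ 2) ^ ((m : ℝ) - 1 / 2)) :
    ∀ ζ ∈ Set.Ioo (-2 : ℝ) 2,
      VL m ζ = (-1 : ℝ) ^ m * 2 * ((Nat.factorial m : ℝ) / (Nat.factorial (2 * m) : ℝ)) *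
        Real.sqrt (4 - ζ ^ 2) * iteratedDeriv m f ζ :=
  vieta_lucas_rodrigues_general m f hf
end

section
/- Fix a natural number m ≥ 1, let f : (−2, 2) → ℝ be f(ζ) = (4 − ζ²)^{m − 1/2} (real power), and define g : (−2, 2) → ℝ by g(ζ) = √(4 − ζ²) · f^{(m)}(ζ). Then g satisfies the Vieta–Lucas differential equation: (4 − ζ²)·g''(ζ) − ζ·g'(ζ) + m²·g(ζ) = 0 for all ζ ∈ (−2, 2). -/
/-!
The weight `f = (4 - ζ²)^(m - 1/2)` satisfies the Pearson equation `(4 - ζ²) f' = (1 - 2m) ζ f`.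
Differentiating it `n + 1` times, only three Leibniz terms survive because `4 - ζ²` is quadratic,
and the resulting three-term recurrence at `n = m` says that `h = f^(m)` solves
`(4 - ζ²) h'' - 3ζ h' + (m² - 1) h = 0`, the equation of the Chebyshev polynomials of the second
kind. Multiplying any solution of it by `√(4 - ζ²)` gives a solution of the Vieta–Lucas
(Chebyshev first kind) equation.
-/

open Real Set Filter Topology
open scoped ContDiff

section IteratedDeriv

variable {U : Set ℝ} {w : ℝ → ℝ}

theorem ContDiffOn.contDiffOn_iteratedDeriv_of_isOpen (hw : ContDiffOn ℝ ∞ w U) (hU : IsOpen U)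
    (n : ℕ) : ContDiffOn ℝ ∞ (iteratedDeriv n w) U := by
  induction n with
  | zero => simpa using hw
  | succ n ih => simpa only [iteratedDeriv_succ] using ih.deriv_of_isOpen hU le_rfl

theorem ContDiffOn.hasDerivAt_iteratedDeriv (hw : ContDiffOn ℝ ∞ w U) (hU : IsOpen U) (n : ℕ)
    {x : ℝ} (hx : x ∈ U) : HasDerivAt (iteratedDeriv n w) (iteratedDeriv (n + 1) w x) x := by
  rw [iteratedDeriv_succ]
  exact (((hw.contDiffOn_iteratedDeriv_of_isOpen hU n).differentiableOn (by simp)).differentiableAt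
    (hU.mem_nhds hx)).hasDerivAt

theorem HasDerivAt.unique_of_eqOn {L R : ℝ → ℝ} {L' R' x : ℝ} (hU : IsOpen U) (hLR : EqOn L R U)
    (hx : x ∈ U) (hL : HasDerivAt L L' x) (hR : HasDerivAt R R' x) : L' = R' :=
  hL.unique (hR.congr_of_eventuallyEq (hLR.eventuallyEq_of_mem (hU.mem_nhds hx)))

end IteratedDeriv

theorem hasDerivAt_const_sub_sq (c x : ℝ) : HasDerivAt (fun y => c - y ^ 2) (-2 * x) x := by
  simpa using (hasDerivAt_pow 2 x).const_sub c

section Pearson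

variable {U : Set ℝ} {w : ℝ → ℝ} {c : ℝ}

theorem const_sub_sq_mul_iteratedDeriv_add_two (hU : IsOpen U) (hw : ContDiffOn ℝ ∞ w U)
    {k : ℕ} {a : ℝ} {r r' : ℝ → ℝ} (hr : ∀ x ∈ U, HasDerivAt r (r' x) x)
    (h : ∀ x ∈ U, (c - x ^ 2) * iteratedDeriv (k + 1) w x = a * x * iteratedDeriv k w x + r x) :
    ∀ x ∈ U, (c - x ^ 2) * iteratedDeriv (k + 2) w x =
      (a + 2) * x * iteratedDeriv (k + 1) w x + a * iteratedDeriv k w x + r' x := by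
  intro x hx
  have hL := (hasDerivAt_const_sub_sq c x).mul (hw.hasDerivAt_iteratedDeriv hU (k + 1) hx)
  have hR := (((hasDerivAt_id x).const_mul a).mul (hw.hasDerivAt_iteratedDeriv hU k hx)).add
    (hr x hx)
  have := hL.unique_of_eqOn hU h hx hR
  simp only [id] at this
  linear_combination this

theorem iteratedDeriv_recurrence_of_pearson (hU : IsOpen U) (hw : ContDiffOn ℝ ∞ w U) {p : ℝ}
    (hpearson : ∀ x ∈ U, (c - x ^ 2) * deriv w x = -2 * p * x * w x) (n : ℕ) :
    ∀ x ∈ U, (c - x ^ 2) * iteratedDeriv (n + 2) w x =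
      2 * (n + 1 - p) * x * iteratedDeriv (n + 1) w x
        + (n + 1) * (n - 2 * p) * iteratedDeriv n w x := by
  induction n with
  | zero =>
    have h := const_sub_sq_mul_iteratedDeriv_add_two hU hw (k := 0) (a := -2 * p)
      (fun x _ => hasDerivAt_const x 0) fun x hx => by
        rw [zero_add, iteratedDeriv_one, iteratedDeriv_zero, add_zero]
        exact hpearson x hx
    intro x hx
    push_cast
    linear_combination h x hx
  | succ n ih =>
    have h := const_sub_sq_mul_iteratedDeriv_add_two hU hw
      (fun x hx => (hw.hasDerivAt_iteratedDeriv hU n hx).const_mul ((n + 1) * (n - 2 * p))) ih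
    intro x hx
    push_cast
    linear_combination h x hx

end Pearson

theorem isOpen_setOf_pos_const_sub_sq (c : ℝ) : IsOpen {x : ℝ | 0 < c - x ^ 2} :=
  isOpen_lt continuous_const (by fun_prop)

theorem contDiffOn_const_sub_sq_rpow (c p : ℝ) :
    ContDiffOn ℝ ∞ (fun x => (c - x ^ 2) ^ p) {x | 0 < c - x ^ 2} :=
  ContDiffOn.rpow_const_of_ne (by fun_prop) fun _ hx => hx.ne'

section Weight

variable {c x : ℝ}

theorem const_sub_sq_mul_deriv_rpow {p : ℝ} (hx : 0 < c - x ^ 2) :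
    (c - x ^ 2) * deriv (fun y => (c - y ^ 2) ^ p) x = -2 * p * x * (c - x ^ 2) ^ p := by
  rw [((hasDerivAt_const_sub_sq c x).rpow_const (Or.inl hx.ne')).deriv, rpow_sub_one hx.ne']
  field_simp

theorem hasDerivAt_sqrt_const_sub_sq (hx : 0 < c - x ^ 2) :
    HasDerivAt (fun y => √(c - y ^ 2)) (-x / √(c - x ^ 2)) x := by
  convert (hasDerivAt_const_sub_sq c x).sqrt hx.ne' using 1
  ring

theorem ode_sqrt_const_sub_sq_mul {h h₁ h₂ : ℝ → ℝ} {ν : ℝ} (hx : 0 < c - x ^ 2)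
    (hh : ∀ᶠ y in 𝓝 x, HasDerivAt h (h₁ y) y) (hh₁ : HasDerivAt h₁ (h₂ x) x)
    (hode : (c - x ^ 2) * h₂ x - 3 * x * h₁ x + (ν - 1) * h x = 0) :
    (c - x ^ 2) * iteratedDeriv 2 (fun y => √(c - y ^ 2) * h y) x
      - x * deriv (fun y => √(c - y ^ 2) * h y) x + ν * (√(c - x ^ 2) * h x) = 0 := by
  have hpos : ∀ᶠ y in 𝓝 x, 0 < c - y ^ 2 := (isOpen_setOf_pos_const_sub_sq c).mem_nhds hx
  have hg' : ∀ᶠ y in 𝓝 x, HasDerivAt (fun y => √(c - y ^ 2) * h y)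
      (-y / √(c - y ^ 2) * h y + √(c - y ^ 2) * h₁ y) y := by
    filter_upwards [hpos, hh] with y hy hhy
    exact (hasDerivAt_sqrt_const_sub_sq hy).mul hhy
  have hs := hasDerivAt_sqrt_const_sub_sq hx
  have hs0 : √(c - x ^ 2) ≠ 0 := (sqrt_pos.mpr hx).ne'
  have hg'' : HasDerivAt (fun y => -y / √(c - y ^ 2) * h y + √(c - y ^ 2) * h₁ y) _ x :=
    ((((hasDerivAt_id' x).neg).div hs hs0).mul hh.self_of_nhds).add (hs.mul hh₁)
  rw [iteratedDeriv_succ, iteratedDeriv_one, hg'.self_of_nhds.deriv,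
    EventuallyEq.deriv_eq (hg'.mono fun y hy => hy.deriv), hg''.deriv]
  simp only [Pi.div_apply, Pi.neg_apply]
  -- writing `c = s² + x²` with `s = √(c - x²)` makes the identity a rational one in `s`
  have hc : c = √(c - x ^ 2) ^ 2 + x ^ 2 := by rw [sq_sqrt hx.le]; ring
  generalize √(c - x ^ 2) = s at hs0 hc ⊢
  subst hc
  field_simp
  linear_combination s ^ 4 * hode

end Weight

theorem rodrigues_function_satisfies_vieta_lucas_ode_general (m : ℕ)
    (f g : ℝ → ℝ) (hf : ∀ ζ : ℝ, f ζ = (4 - ζ ^ 2) ^ ((m : ℝ) - 1 / 2))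
    (hg : ∀ ζ : ℝ, g ζ = Real.sqrt (4 - ζ ^ 2) * iteratedDeriv m f ζ) :
    ∀ ζ ∈ Set.Ioo (-2 : ℝ) 2,
      (4 - ζ ^ 2) * iteratedDeriv 2 g ζ - ζ * deriv g ζ + (m : ℝ) ^ 2 * g ζ = 0 := by
  rintro ζ ⟨hζl, hζr⟩
  have hζ : 0 < 4 - ζ ^ 2 := by nlinarith
  obtain rfl : g = fun x => √(4 - x ^ 2) * iteratedDeriv m f x := funext hg
  obtain rfl : f = fun x => (4 - x ^ 2) ^ ((m : ℝ) - 1 / 2) := funext hf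
  have hU := isOpen_setOf_pos_const_sub_sq 4
  have hw := contDiffOn_const_sub_sq_rpow 4 ((m : ℝ) - 1 / 2)
  have hrec := iteratedDeriv_recurrence_of_pearson hU hw
    (fun _ hx => const_sub_sq_mul_deriv_rpow hx) m ζ hζ
  refine ode_sqrt_const_sub_sq_mul hζ
    (eventually_of_mem (hU.mem_nhds hζ) fun x hx => hw.hasDerivAt_iteratedDeriv hU m hx)
    (hw.hasDerivAt_iteratedDeriv hU (m + 1) hζ) ?_
  linear_combination hrec

theorem rodrigues_function_satisfies_vieta_lucas_ode (m : ℕ) (hm : 1 ≤ m)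
    (f g : ℝ → ℝ) (hf : ∀ ζ : ℝ, f ζ = (4 - ζ ^ 2) ^ ((m : ℝ) - 1 / 2))
    (hg : ∀ ζ : ℝ, g ζ = Real.sqrt (4 - ζ ^ 2) * iteratedDeriv m f ζ) :
    ∀ ζ ∈ Set.Ioo (-2 : ℝ) 2,
      (4 - ζ ^ 2) * iteratedDeriv 2 g ζ - ζ * deriv g ζ + (m : ℝ) ^ 2 * g ζ = 0 :=
  rodrigues_function_satisfies_vieta_lucas_ode_general m f g hf hg
end
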